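/- arXiv:1707.03843 — 9 statements merged into one kernel-verified Lean document; each statement's English description precedes it below -/
import Mathlib

section
/- Let d ≥ 1 and N ≥ 1 be integers and let ℓ_1, …, ℓ_{d+1} be positive integers with ℓ_i ≤ N for all i and ℓ_i + ℓ_j ≥ N for all 1 ≤ i < j ≤ d+1. Then the number of lattice points in V_{ℓ,N}^d equals C(N+d, d) − Σ_{i=1}^{d+1} C(N−ℓ_i+d−1, d), where C(a, b) denotes the binomial coefficient (equal to 0 when a < b). -/
/-!
Inside the simplex `∑ x ≤ N`, the domain is cut out by the `d + 1` further constraints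
`x i ≤ ℓ i` and `N - ℓ (last d) ≤ ∑ x`. The points violating one constraint form a corner of the
simplex, a translate of the simplex of size `N - ℓ i - 1`, and since `ℓ i + ℓ j ≥ N` no point
violates two constraints. So the domain is the simplex minus `d + 1` disjoint corners, and each
of these is counted by stars and bars.
-/

open Finset

/-- The discrete polyhedral domain `V_{ℓ,N}^d`:
lattice points `x ∈ ℕ₀^d` with `x i ≤ ℓ i` for `1 ≤ i ≤ d` and `N - ℓ_{d+1} ≤ |x| ≤ N`. -/
def polyDomain (d N : ℕ) (ℓ : Fin (d + 1) → ℕ) : Finset (Fin d → ℕ) :=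
  (Fintype.piFinset fun i : Fin d => Finset.range (ℓ i.castSucc + 1)).filter fun x =>
    N - ℓ (Fin.last d) ≤ ∑ i, x i ∧ ∑ i, x i ≤ N

open Function

def simplex (d M : ℕ) : Finset (Fin d → ℕ) :=
  (Fintype.piFinset fun _ : Fin d => range (M + 1)).filter fun x => ∑ i, x i ≤ M

lemma mem_simplex {d M : ℕ} {x : Fin d → ℕ} : x ∈ simplex d M ↔ ∑ i, x i ≤ M := by
  simp only [simplex, mem_filter, Fintype.mem_piFinset, mem_range, and_iff_right_iff_imp]
  intro h i
  have := single_le_sum (fun j _ => Nat.zero_le (x j)) (mem_univ i)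
  omega

lemma simplex_succ (d M : ℕ) :
    simplex (d + 1) M =
      (range (M + 1)).biUnion fun k =>
        (simplex d (M - k)).map ⟨Fin.cons k, Fin.cons_right_injective (α := fun _ => ℕ) k⟩ := by
  ext x
  simp only [mem_simplex, mem_biUnion, mem_range, mem_map, Embedding.coeFn_mk]
  constructor
  · intro hx
    rw [Fin.sum_univ_succ] at hx
    exact ⟨x 0, by omega, Fin.tail x, by simp only [Fin.tail]; omega, Fin.cons_self_tail x⟩
  · rintro ⟨k, hk, y, hy, rfl⟩
    rw [Fin.sum_univ_succ]
    simp only [Fin.cons_zero, Fin.cons_succ]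
    omega

lemma card_simplex (d M : ℕ) : #(simplex d M) = (M + d).choose d := by
  induction d generalizing M with
  | zero =>
    rw [Nat.choose_zero_right, card_eq_one]
    exact ⟨0, eq_singleton_iff_unique_mem.2 ⟨by simp [mem_simplex], fun x _ => Subsingleton.elim _ _⟩⟩
  | succ d ih =>
    rw [simplex_succ, card_biUnion]
    · simp only [card_map, ih]
      rw [← sum_range_reflect, ← add_assoc, ← Nat.sum_range_add_choose]
      refine sum_congr rfl fun k hk => ?_
      rw [mem_range] at hk
      congr 1
      omega
    · intro k _ k' _ hkk'
      simp only [Function.onFun, disjoint_left, mem_map, Embedding.coeFn_mk]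
      rintro _ ⟨y, -, rfl⟩ ⟨y', -, h⟩
      exact hkk' (Fin.cons_injective2 h).1.symm

lemma sum_add_single {d : ℕ} (y : Fin d → ℕ) (a : Fin d) (k : ℕ) :
    ∑ i, (y + Pi.single a k : Fin d → ℕ) i = ∑ i, y i + k := by
  simp [sum_add_distrib]

lemma filter_lt_apply_simplex {d M c : ℕ} (a : Fin d) (hc : c < M) :
    {x ∈ simplex d M | c < x a} =
      (simplex d (M - (c + 1))).map (addRightEmbedding (Pi.single a (c + 1))) := by
  ext x
  simp only [mem_filter, mem_map, mem_simplex, addRightEmbedding_apply]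
  constructor
  · rintro ⟨hx, hxa⟩
    have hx_eq : x - Pi.single a (c + 1) + Pi.single a (c + 1) = x := by
      ext i
      rcases eq_or_ne i a with rfl | hi
      · simp only [Pi.add_apply, Pi.sub_apply, Pi.single_eq_same]; omega
      · simp [hi]
    refine ⟨x - Pi.single a (c + 1), ?_, hx_eq⟩
    have := sum_add_single (x - Pi.single a (c + 1)) a (c + 1)
    rw [hx_eq] at this
    omega
  · rintro ⟨y, hy, rfl⟩
    rw [sum_add_single]
    exact ⟨by omega, by simp only [Pi.add_apply, Pi.single_eq_same]; omega⟩

-- For `M ≤ c` the set is empty and the truncated subtraction gives `(d - 1).choose d = 0`.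
lemma card_filter_lt_apply_simplex {d M : ℕ} (c : ℕ) (a : Fin d) :
    #{x ∈ simplex d M | c < x a} = (M - c + d - 1).choose d := by
  have := a.pos
  by_cases hc : c < M
  · rw [filter_lt_apply_simplex a hc, card_map, card_simplex]
    congr 1
    omega
  · rw [filter_eq_empty_iff.2, card_empty, Nat.choose_eq_zero_of_lt (by omega)]
    intro x hx
    have := single_le_sum (fun j _ => Nat.zero_le (x j)) (mem_univ a)
    rw [mem_simplex] at hx
    omega

lemma filter_sum_add_lt_simplex {d M c : ℕ} (hc : c < M) :
    {x ∈ simplex d M | ∑ i, x i + c < M} = simplex d (M - (c + 1)) := by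
  ext x
  simp only [mem_filter, mem_simplex]
  omega

lemma card_filter_sum_add_lt_simplex {d M : ℕ} (hd : 0 < d) (c : ℕ) :
    #{x ∈ simplex d M | ∑ i, x i + c < M} = (M - c + d - 1).choose d := by
  by_cases hc : c < M
  · rw [filter_sum_add_lt_simplex hc, card_simplex]
    congr 1
    omega
  · rw [filter_eq_empty_iff.2 (fun x _ => by omega), card_empty,
      Nat.choose_eq_zero_of_lt (by omega)]

def corner (d N : ℕ) (ℓ : Fin (d + 1) → ℕ) : Fin (d + 1) → Finset (Fin d → ℕ) :=
  Fin.lastCases {x ∈ simplex d N | ∑ i, x i + ℓ (Fin.last d) < N}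
    fun j => {x ∈ simplex d N | ℓ j.castSucc < x j}

section corner

variable {d N : ℕ} {ℓ : Fin (d + 1) → ℕ}

@[simp]
lemma corner_last :
    corner d N ℓ (Fin.last d) = {x ∈ simplex d N | ∑ i, x i + ℓ (Fin.last d) < N} :=
  Fin.lastCases_last

@[simp]
lemma corner_castSucc (j : Fin d) :
    corner d N ℓ j.castSucc = {x ∈ simplex d N | ℓ j.castSucc < x j} :=
  Fin.lastCases_castSucc j

lemma corner_subset_simplex (i : Fin (d + 1)) : corner d N ℓ i ⊆ simplex d N := by
  induction i using Fin.lastCases <;> simp [filter_subset]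

lemma card_corner (hd : 0 < d) (i : Fin (d + 1)) :
    #(corner d N ℓ i) = (N - ℓ i + d - 1).choose d := by
  induction i using Fin.lastCases with
  | last => rw [corner_last]; exact card_filter_sum_add_lt_simplex hd _
  | cast j => rw [corner_castSucc]; exact card_filter_lt_apply_simplex _ j

lemma pairwise_disjoint_corner (hpair : ∀ i j : Fin (d + 1), i < j → N ≤ ℓ i + ℓ j) :
    Pairwise (Disjoint on corner d N ℓ) := by
  rw [pairwise_disjoint_on]
  intro i j hij
  obtain ⟨a, rfl⟩ := Fin.exists_castSucc_eq.2 (Fin.ne_last_of_lt hij)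
  have hN := hpair _ _ hij
  rw [disjoint_left]
  intro x hxa hxj
  simp only [corner_castSucc, mem_filter, mem_simplex] at hxa
  induction j using Fin.lastCases with
  | last =>
    simp only [corner_last, mem_filter] at hxj
    have := single_le_sum (fun j _ => Nat.zero_le (x j)) (mem_univ a)
    omega
  | cast b =>
    simp only [corner_castSucc, mem_filter] at hxj
    have hab : a ≠ b := (Fin.castSucc_lt_castSucc_iff.1 hij).ne
    have := sum_le_sum_of_subset (f := x) (subset_univ {a, b})
    rw [sum_pair hab] at this
    omega

lemma polyDomain_eq_sdiff : polyDomain d N ℓ = simplex d N \ univ.biUnion (corner d N ℓ) := by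
  ext x
  simp only [polyDomain, mem_filter, Fintype.mem_piFinset, mem_range, mem_sdiff, mem_biUnion,
    mem_univ, true_and, not_exists, Fin.forall_fin_succ', corner_castSucc, corner_last, mem_simplex,
    not_and, not_lt]
  constructor
  · rintro ⟨hx, hlo, hhi⟩
    exact ⟨hhi, fun j _ => by have := hx j; omega, fun _ => by omega⟩
  · rintro ⟨hhi, hx, hlo⟩
    exact ⟨fun j => by have := hx j hhi; omega, by omega, hhi⟩

end corner

theorem stmt0_general (d N : ℕ) (hd : 1 ≤ d) (ℓ : Fin (d + 1) → ℕ)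
    (hpair : ∀ i j : Fin (d + 1), i < j → N ≤ ℓ i + ℓ j) :
    ((polyDomain d N ℓ).card : ℤ) =
      ((N + d).choose d : ℤ) - ∑ i : Fin (d + 1), ((N - ℓ i + d - 1).choose d : ℤ) := by
  have hsplit := card_sdiff_add_card_eq_card
    (biUnion_subset.2 fun i (_ : i ∈ univ) => corner_subset_simplex (N := N) (ℓ := ℓ) i)
  rw [← polyDomain_eq_sdiff, card_biUnion ((pairwise_disjoint_corner hpair).set_pairwise _),
    card_simplex] at hsplit
  rw [eq_sub_iff_add_eq, ← hsplit]
  push_cast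
  simp only [card_corner hd]

theorem stmt0 (d N : ℕ) (hd : 1 ≤ d) (hN : 1 ≤ N) (ℓ : Fin (d + 1) → ℕ)
    (hpos : ∀ i, 1 ≤ ℓ i) (hle : ∀ i, ℓ i ≤ N)
    (hpair : ∀ i j : Fin (d + 1), i < j → N ≤ ℓ i + ℓ j) :
    ((polyDomain d N ℓ).card : ℤ) =
      ((N + d).choose d : ℤ) - ∑ i : Fin (d + 1), ((N - ℓ i + d - 1).choose d : ℤ) :=
  stmt0_general d N hd ℓ hpair
end

section
/- Let d ≥ 1 and N ≥ 1 be integers and let ℓ_1, …, ℓ_{d+1} be positive integers with ℓ_i ≤ N for all i and ℓ_i + ℓ_j ≥ N for all 1 ≤ i < j ≤ d+1. For every pair of distinct indices i, j ∈ {1,…,d+1}: if a polynomial f ∈ ℝ[x_1,…,x_d] vanishes at every point of V_{ℓ,N}^d, then the function L_{i,j}f also vanishes at every point of V_{ℓ,N}^d; that is, the vanishing ideal of V_{ℓ,N}^d is invariant under L_{i,j}. -/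
open Finset MvPolynomial

/-- Extended coordinate: `x_k` for `k ≤ d` and `x_{d+1} = N - |x|`. -/
def coordExt (d : ℕ) (N : ℝ) (x : Fin d → ℤ) (k : Fin (d + 1)) : ℝ :=
  if h : (k : ℕ) < d then (x ⟨k, h⟩ : ℝ) else N - ∑ i, (x i : ℝ)

/-- The shift vector: `e_k` for `k ≤ d`, and `0` for `k = d+1`. -/
def shiftVec (d : ℕ) (k : Fin (d + 1)) : Fin d → ℤ :=
  if h : (k : ℕ) < d then Pi.single ⟨k, h⟩ 1 else 0

/-- The operator `L_{i,j}`, for `i ≠ j ∈ {1,…,d+1}`: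
`(L_{i,j}f)(x) = x_j(x_i-ℓ_i)(f(x+e_i-e_j)-f(x)) + x_i(x_j-ℓ_j)(f(x+e_j-e_i)-f(x))`,
where `x_{d+1} = N - |x|` and `e_{d+1}` acts as the zero shift. -/
def Lop (d : ℕ) (N : ℝ) (ℓ : Fin (d + 1) → ℝ) (i j : Fin (d + 1))
    (f : (Fin d → ℤ) → ℝ) : (Fin d → ℤ) → ℝ := fun x =>
  coordExt d N x j * (coordExt d N x i - ℓ i) *
      (f (x + shiftVec d i - shiftVec d j) - f x) +
    coordExt d N x i * (coordExt d N x j - ℓ j) *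
      (f (x + shiftVec d j - shiftVec d i) - f x)

lemma eval_zero_of (d N : ℕ) (ℓ : Fin (d + 1) → ℕ) (f : MvPolynomial (Fin d) ℝ)
    (hf : ∀ x ∈ polyDomain d N ℓ, eval (fun t => (x t : ℝ)) f = 0)
    (y : Fin d → ℤ) (h0 : ∀ t, 0 ≤ y t) (h1 : ∀ t, y t ≤ (ℓ t.castSucc : ℤ))
    (h2 : (N : ℤ) - (ℓ (Fin.last d) : ℤ) ≤ ∑ t, y t) (h3 : ∑ t, y t ≤ (N : ℤ)) :
    eval (fun t => (y t : ℝ)) f = 0 := by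
  have hy : ∀ t, ((y t).toNat : ℤ) = y t := fun t => Int.toNat_of_nonneg (h0 t)
  have hsum : ((∑ t, (y t).toNat : ℕ) : ℤ) = ∑ t, y t := by
    push_cast [hy]; rfl
  have hmem : (fun t => (y t).toNat) ∈ polyDomain d N ℓ := by
    simp only [polyDomain, Finset.mem_filter, Fintype.mem_piFinset, Finset.mem_range,
      Nat.lt_succ_iff]
    refine ⟨fun t => ?_, ?_, ?_⟩
    · have := h1 t; omega
    · have h2' := h2; rw [← hsum] at h2'; omega
    · have h3' := h3; rw [← hsum] at h3'; exact_mod_cast h3'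
  have := hf _ hmem
  have heq : (fun t => ((y t : ℤ) : ℝ)) = fun t => (((y t).toNat : ℕ) : ℝ) := by
    funext t
    have h : (((y t).toNat : ℤ) : ℝ) = ((y t : ℤ) : ℝ) := by rw [hy]
    push_cast at h
    exact h.symm
  rw [heq]
  exact this


lemma key (d N : ℕ) (ℓ : Fin (d + 1) → ℕ) (f : MvPolynomial (Fin d) ℝ)
    (hf : ∀ x ∈ polyDomain d N ℓ, eval (fun t => (x t : ℝ)) f = 0)
    (i j : Fin (d + 1)) (hij : i ≠ j) (x : Fin d → ℕ) (hx : x ∈ polyDomain d N ℓ) :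
    coordExt d (N : ℝ) (fun t => (x t : ℤ)) j *
        (coordExt d (N : ℝ) (fun t => (x t : ℤ)) i - (ℓ i : ℝ)) *
      eval (fun t =>
        ((((fun t => (x t : ℤ)) + shiftVec d i - shiftVec d j) t : ℤ) : ℝ)) f = 0 := by
  -- extract domain facts
  simp only [polyDomain, Finset.mem_filter, Fintype.mem_piFinset, Finset.mem_range,
    Nat.lt_succ_iff] at hx
  obtain ⟨hxl, hs1, hs2⟩ := hx
  by_cases hc : coordExt d (N : ℝ) (fun t => (x t : ℤ)) j *
      (coordExt d (N : ℝ) (fun t => (x t : ℤ)) i - (ℓ i : ℝ)) = 0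
  · rw [hc, zero_mul]
  obtain ⟨hj, hi⟩ := mul_ne_zero_iff.mp hc
  rw [mul_eq_zero]
  right
  set y : Fin d → ℤ := (fun t => (x t : ℤ)) + shiftVec d i - shiftVec d j with hydef
  have hsumcast : (∑ t, ((x t : ℤ) : ℝ)) = ((∑ t, x t : ℕ) : ℝ) := by push_cast; rfl
  -- facts from the nonvanishing of the coefficient
  have hjfact : if h : (j : ℕ) < d then 1 ≤ x ⟨j, h⟩ else (∑ t, x t) + 1 ≤ N := by
    by_cases h : (j : ℕ) < d
    · simp only [dif_pos h]
      rw [coordExt, dif_pos h] at hj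
      have : x ⟨j, h⟩ ≠ 0 := by
        intro hzero; apply hj; push_cast [hzero]; norm_num
      omega
    · simp only [dif_neg h]
      rw [coordExt, dif_neg h, hsumcast] at hj
      have : (∑ t, x t) ≠ N := by
        intro hEq; apply hj; rw [hEq]; ring
      omega
  have hifact : if h : (i : ℕ) < d then x ⟨i, h⟩ + 1 ≤ ℓ i else N + 1 ≤ (∑ t, x t) + ℓ i := by
    by_cases h : (i : ℕ) < d
    · simp only [dif_pos h]
      rw [coordExt, dif_pos h] at hi
      have hne : x ⟨i, h⟩ ≠ ℓ i := by
        intro hEq; apply hi; push_cast [hEq]; ring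
      have hcast : i = (⟨(i : ℕ), h⟩ : Fin d).castSucc := by
        apply Fin.ext; rfl
      have := hxl ⟨(i : ℕ), h⟩
      rw [← hcast] at this
      omega
    · simp only [dif_neg h]
      rw [coordExt, dif_neg h, hsumcast] at hi
      have hlast : i = Fin.last d := by
        apply Fin.ext
        have := i.isLt; simp only [Fin.val_last]; omega
      have hne : ¬ ((N : ℝ) - ((∑ t, x t : ℕ) : ℝ) = (ℓ i : ℝ)) := sub_ne_zero.mp hi
      have : ¬ ((N : ℤ) - (∑ t, x t : ℕ) = (ℓ i : ℤ)) := by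
        intro hEq; apply hne; exact_mod_cast hEq
      rw [hlast] at this ⊢
      omega
  -- generic facts about y
  have hyt : ∀ t, y t = (x t : ℤ) + shiftVec d i t - shiftVec d j t := fun t => rfl
  have hshift : ∀ (k : Fin (d + 1)) (t : Fin d),
      shiftVec d k t = if h : (k : ℕ) < d then (if t = ⟨k, h⟩ then 1 else 0) else 0 := by
    intro k t
    unfold shiftVec
    split
    · simp [Pi.single_apply]
    · rfl
  have hsumshift : ∀ k : Fin (d + 1),
      (∑ t, shiftVec d k t) = if (k : ℕ) < d then 1 else 0 := by
    intro k
    unfold shiftVec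
    split <;> rename_i h
    · simp [Finset.sum_pi_single']
    · simp
  have hsumy : (∑ t, y t) = ((∑ t, x t : ℕ) : ℤ) +
      (if (i : ℕ) < d then 1 else 0) - (if (j : ℕ) < d then 1 else 0) := by
    simp only [hydef, Pi.sub_apply, Pi.add_apply]
    rw [Finset.sum_sub_distrib, Finset.sum_add_distrib, hsumshift i, hsumshift j]
    push_cast
    ring
  have hs0 : ∀ (k : Fin (d + 1)) (t : Fin d), 0 ≤ shiftVec d k t := by
    intro k t
    rw [hshift]
    split
    · split <;> norm_num
    · norm_num
  have hjb : ∀ t, shiftVec d j t = 0 ∨ (shiftVec d j t = 1 ∧ 1 ≤ (x t : ℤ)) := by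
    intro t
    rw [hshift]
    split <;> rename_i h
    · rw [dif_pos h] at hjfact
      split <;> rename_i ht
      · right
        refine ⟨rfl, ?_⟩
        rw [ht]
        exact_mod_cast hjfact
      · left; rfl
    · left; rfl
  have hib : ∀ t, shiftVec d i t = 0 ∨
      (shiftVec d i t = 1 ∧ (x t : ℤ) + 1 ≤ (ℓ t.castSucc : ℤ)) := by
    intro t
    rw [hshift]
    split <;> rename_i h
    · rw [dif_pos h] at hifact
      split <;> rename_i ht
      · right
        refine ⟨rfl, ?_⟩
        have hcast : (⟨(i : ℕ), h⟩ : Fin d).castSucc = i := Fin.ext rfl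
        rw [ht, hcast]
        exact_mod_cast hifact
      · left; rfl
    · left; rfl
  have hsum2 : ((N : ℤ) - (ℓ (Fin.last d) : ℤ) ≤ ∑ t, y t) ∧ ((∑ t, y t) ≤ (N : ℤ)) := by
    rw [hsumy]
    by_cases hid : (i : ℕ) < d <;> by_cases hjd : (j : ℕ) < d
    · simp only [if_pos hid, if_pos hjd]
      constructor <;> omega
    · rw [dif_neg hjd] at hjfact
      simp only [if_pos hid, if_neg hjd]
      constructor <;> omega
    · rw [dif_neg hid] at hifact
      have hlast : i = Fin.last d := Fin.ext (by have := i.isLt; simp only [Fin.val_last]; omega)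
      rw [hlast] at hifact
      simp only [if_neg hid, if_pos hjd]
      constructor <;> omega
    · exfalso
      apply hij
      have h1 := i.isLt
      have h2 := j.isLt
      apply Fin.ext
      omega
  -- now apply eval_zero_of
  refine eval_zero_of d N ℓ f hf y ?_ ?_ hsum2.1 hsum2.2
  · intro t
    have h1 := hjb t
    have h2 := hs0 i t
    rw [hyt]
    omega
  · intro t
    have h1 := hib t
    have h2 := hs0 j t
    have h3 := hxl t
    rw [hyt]
    omega


/-- If a polynomial vanishes on `V_{ℓ,N}^d`, so does `L_{i,j} f`:
the vanishing ideal of `V_{ℓ,N}^d` is invariant under `L_{i,j}`. -/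
theorem stmt6 (d N : ℕ) (hd : 1 ≤ d) (hN : 1 ≤ N) (ℓ : Fin (d + 1) → ℕ)
    (hpos : ∀ i, 1 ≤ ℓ i) (hle : ∀ i, ℓ i ≤ N)
    (hpair : ∀ i j : Fin (d + 1), i < j → N ≤ ℓ i + ℓ j)
    (i j : Fin (d + 1)) (hij : i ≠ j) (f : MvPolynomial (Fin d) ℝ)
    (hf : ∀ x ∈ polyDomain d N ℓ, eval (fun t => (x t : ℝ)) f = 0) :
    ∀ x ∈ polyDomain d N ℓ,
      Lop d (N : ℝ) (fun t => (ℓ t : ℝ)) i j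
        (fun y => eval (fun t => (y t : ℝ)) f) (fun t => (x t : ℤ)) = 0 := by
  intro x hx
  have h0 : eval (fun t => (((x t : ℤ) : ℝ))) f = 0 := by
    have h := hf x hx
    have : (fun t => (((x t : ℤ)) : ℝ)) = fun t => ((x t : ℕ) : ℝ) := by
      funext t; push_cast; rfl
    rw [this]
    exact h
  have k1 := key d N ℓ f hf i j hij x hx
  have k2 := key d N ℓ f hf j i hij.symm x hx
  simp only [Lop]
  rw [h0, sub_zero, sub_zero, k1, k2]
  norm_num
end

section
/- Let d ≥ 1 be an integer, N ∈ ℝ, and ℓ_1, …, ℓ_{d+1} ∈ ℝ. For every pair of distinct indices i, j ∈ {1,…,d+1} and every n ∈ ℕ_0: if f ∈ ℝ[x_1,…,x_d] is a polynomial of total degree at most n, then the function x ↦ (L_{i,j}f)(x) coincides on ℤ^d with a polynomial of total degree at most n; that is, L_{i,j} maps Π_n^d into Π_n^d. -/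
open Finset MvPolynomial

/-!
With `Δ_a f = f(· + a) - f` and `a = e_i - e_j`, the operator is
`L f = x_j (x_i - ℓ_i) Δ_a f + x_i (x_j - ℓ_j) Δ_{-a} f`, where `x_{d+1} = N - |x|` is still affine.
A difference operator lowers the total degree of a polynomial by at least one, and
`Δ_a f + Δ_{-a} f = -Δ_{-a} Δ_a f` lowers it by two. Hence in
`L f = x_j (x_i - ℓ_i) (Δ_a f + Δ_{-a} f) + (ℓ_i x_j - ℓ_j x_i) Δ_{-a} f`
both terms have degree at most `deg f`.
-/

namespace MvPolynomial

variable {σ R : Type*} [CommRing R]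

noncomputable def translate (a : σ → R) : MvPolynomial σ R →ₐ[R] MvPolynomial σ R :=
  aeval fun i => X i + C (a i)

@[simp]
lemma translate_X (a : σ → R) (i : σ) : translate a (X i) = X i + C (a i) :=
  aeval_X _ _

@[simp]
lemma translate_C (a : σ → R) (c : R) : translate a (C c) = C c :=
  aeval_C _ _

lemma eval_translate (a x : σ → R) (p : MvPolynomial σ R) :
    eval x (translate a p) = eval (x + a) p := by
  induction p using MvPolynomial.induction_on with
  | C c => simp
  | add p q hp hq => simp [hp, hq]
  | mul_X p i hp => simp [hp]

lemma translate_neg_translate (a : σ → R) (p : MvPolynomial σ R) :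
    translate (-a) (translate a p) = p := by
  rw [← AlgHom.comp_apply, show (translate (-a)).comp (translate a) = AlgHom.id R _ from
    algHom_ext fun i => by simp, AlgHom.id_apply]

lemma translate_mul_X_sub (a : σ → R) (p : MvPolynomial σ R) (i : σ) :
    translate a (p * X i) - p * X i = (translate a p - p) * (X i + C (a i)) + C (a i) * p := by
  simp only [map_mul, translate_X]
  ring

lemma totalDegree_X_add_C_le [Nontrivial R] (i : σ) (c : R) :
    (X i + C c : MvPolynomial σ R).totalDegree ≤ 1 :=
  (totalDegree_add _ _).trans <| max_le (totalDegree_X i).le (by rw [totalDegree_C]; omega)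

section IsDomain

variable [IsDomain R]

lemma translate_monomial_sub_eq_zero_or_totalDegree_lt (a : σ → R) (s : σ →₀ ℕ) (c : R) :
    translate a (monomial s c) - monomial s c = 0 ∨
      (translate a (monomial s c) - monomial s c).totalDegree < (monomial s c).totalDegree := by
  refine induction_on_monomial (motive := fun p => translate a p - p = 0 ∨
    (translate a p - p).totalDegree < p.totalDegree) (fun c => by simp) (fun p i ih => ?_) s c
  rcases eq_or_ne p 0 with rfl | hp
  · simp
  right
  have hdiff : ((translate a p - p) * (X i + C (a i))).totalDegree ≤ p.totalDegree := by
    rcases ih with h | h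
    · simp [h]
    · have := totalDegree_X_add_C_le i (a i)
      exact (totalDegree_mul _ _).trans (by omega)
  have hconst : (C (a i) * p).totalDegree ≤ p.totalDegree :=
    (totalDegree_mul _ _).trans (by simp)
  rw [translate_mul_X_sub, totalDegree_mul_of_isDomain hp (X_ne_zero i), totalDegree_X]
  exact Nat.lt_succ_of_le <| (totalDegree_add _ _).trans (max_le hdiff hconst)

theorem translate_sub_eq_zero_or_totalDegree_lt (a : σ → R) (p : MvPolynomial σ R) :
    translate a p - p = 0 ∨ (translate a p - p).totalDegree < p.totalDegree := by
  rcases Nat.eq_zero_or_pos p.totalDegree with h | h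
  · left
    rw [totalDegree_eq_zero_iff_eq_C.1 h, translate_C, sub_self]
  right
  have hsum : translate a p - p =
      ∑ s ∈ p.support, (translate a (monomial s (coeff s p)) - monomial s (coeff s p)) := by
    conv_lhs => rw [p.as_sum]
    rw [map_sum, sum_sub_distrib]
  refine hsum ▸ lt_of_le_of_lt (totalDegree_finsetSum_le fun s hs => ?_) (Nat.sub_one_lt_of_lt h)
  have hs' : (monomial s (coeff s p)).totalDegree ≤ p.totalDegree := by
    rw [totalDegree_monomial _ (mem_support_iff.1 hs)]
    exact le_totalDegree hs
  rcases translate_monomial_sub_eq_zero_or_totalDegree_lt a s (coeff s p) with h0 | hlt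
  · simp [h0]
  · omega

theorem totalDegree_mul_translate_sub_le (a : σ → R) {Q p : MvPolynomial σ R} {n : ℕ}
    (h : Q.totalDegree + p.totalDegree ≤ n + 1) :
    (Q * (translate a p - p)).totalDegree ≤ n := by
  rcases translate_sub_eq_zero_or_totalDegree_lt a p with h0 | hlt
  · simp [h0]
  · exact (totalDegree_mul _ _).trans (by omega)

theorem totalDegree_mul_second_difference_le (a b : σ → R) {Q p : MvPolynomial σ R} {n : ℕ}
    (h : Q.totalDegree + p.totalDegree ≤ n + 2) :
    (Q * (translate b (translate a p - p) - (translate a p - p))).totalDegree ≤ n := by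
  rcases translate_sub_eq_zero_or_totalDegree_lt a p with h0 | hlt
  · simp [h0]
  · exact totalDegree_mul_translate_sub_le b (by omega)

noncomputable def exchangeOp (P Q : MvPolynomial σ R) (l l' : R) (a : σ → R)
    (f : MvPolynomial σ R) : MvPolynomial σ R :=
  P * (Q - C l) * (translate a f - f) + Q * (P - C l') * (translate (-a) f - f)

theorem totalDegree_exchangeOp_le {P Q f : MvPolynomial σ R} (l l' : R) (a : σ → R) {n : ℕ}
    (hP : P.totalDegree ≤ 1) (hQ : Q.totalDegree ≤ 1) (hf : f.totalDegree ≤ n) :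
    (exchangeOp P Q l l' a f).totalDegree ≤ n := by
  have hsplit : exchangeOp P Q l l' a f =
      -(P * (Q - C l)) * (translate (-a) (translate a f - f) - (translate a f - f)) +
        (C l * P - C l' * Q) * (translate (-a) f - f) := by
    rw [exchangeOp, map_sub, translate_neg_translate]
    ring
  have hquad : (-(P * (Q - C l))).totalDegree ≤ 2 := by
    rw [totalDegree_neg]
    exact (totalDegree_mul _ _).trans (by have := totalDegree_sub_C_le Q l; omega)
  have hlin : (C l * P - C l' * Q).totalDegree ≤ 1 := by
    refine (totalDegree_sub _ _).trans (max_le ?_ ?_) <;>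
      exact (totalDegree_mul _ _).trans (by rw [totalDegree_C]; omega)
  rw [hsplit]
  exact (totalDegree_add _ _).trans <| max_le
    (totalDegree_mul_second_difference_le a (-a) (by omega))
    (totalDegree_mul_translate_sub_le (-a) (by omega))

end IsDomain

end MvPolynomial

noncomputable def coordPoly (d : ℕ) (N : ℝ) (k : Fin (d + 1)) : MvPolynomial (Fin d) ℝ :=
  if h : (k : ℕ) < d then X ⟨k, h⟩ else C N - ∑ t, X t

lemma eval_coordPoly (d : ℕ) (N : ℝ) (x : Fin d → ℤ) (k : Fin (d + 1)) :
    eval (fun t => (x t : ℝ)) (coordPoly d N k) = coordExt d N x k := by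
  unfold coordPoly coordExt
  split <;> simp

lemma totalDegree_coordPoly_le (d : ℕ) (N : ℝ) (k : Fin (d + 1)) :
    (coordPoly d N k).totalDegree ≤ 1 := by
  unfold coordPoly
  split
  · exact (totalDegree_X _).le
  · exact (totalDegree_sub _ _).trans <| max_le (by simp)
      (totalDegree_finsetSum_le fun t _ => (totalDegree_X t).le)

lemma Lop_eval_eq_eval_exchangeOp (d : ℕ) (N : ℝ) (ℓ : Fin (d + 1) → ℝ) (i j : Fin (d + 1))
    (f : MvPolynomial (Fin d) ℝ) (x : Fin d → ℤ) :
    Lop d N ℓ i j (fun y => eval (fun t => (y t : ℝ)) f) x =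
      eval (fun t => (x t : ℝ)) (exchangeOp (coordPoly d N j) (coordPoly d N i) (ℓ i) (ℓ j)
        (fun t => ((shiftVec d i - shiftVec d j) t : ℝ)) f) := by
  have hcast (s : Fin d → ℤ) :
      (fun t => ((x + s) t : ℝ)) = (fun t => (x t : ℝ)) + fun t => (s t : ℝ) := by
    ext t; simp
  have hneg : (fun t => ((shiftVec d j - shiftVec d i) t : ℝ)) =
      -fun t => ((shiftVec d i - shiftVec d j) t : ℝ) := by
    ext t; simp
  simp only [Lop, exchangeOp, map_add, map_mul, map_sub, eval_C, eval_translate, eval_coordPoly]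
  rw [add_sub_assoc, hcast, add_sub_assoc, hcast, hneg]

theorem stmt7_general (d : ℕ) (N : ℝ) (ℓ : Fin (d + 1) → ℝ)
    (i j : Fin (d + 1)) (n : ℕ)
    (f : MvPolynomial (Fin d) ℝ) (hf : f.totalDegree ≤ n) :
    ∃ g : MvPolynomial (Fin d) ℝ, g.totalDegree ≤ n ∧
      ∀ x : Fin d → ℤ,
        Lop d N ℓ i j (fun y => eval (fun t => (y t : ℝ)) f) x =
          eval (fun t => (x t : ℝ)) g :=
  ⟨_, totalDegree_exchangeOp_le _ _ _ (totalDegree_coordPoly_le d N j)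
    (totalDegree_coordPoly_le d N i) hf, Lop_eval_eq_eval_exchangeOp d N ℓ i j f⟩

/-- `L_{i,j}` maps `Π_n^d` into `Π_n^d`: applied to (the evaluation of) a polynomial of
total degree at most `n`, it coincides on `ℤ^d` with a polynomial of total degree at
most `n`. -/
theorem stmt7 (d : ℕ) (hd : 1 ≤ d) (N : ℝ) (ℓ : Fin (d + 1) → ℝ)
    (i j : Fin (d + 1)) (hij : i ≠ j) (n : ℕ)
    (f : MvPolynomial (Fin d) ℝ) (hf : f.totalDegree ≤ n) :
    ∃ g : MvPolynomial (Fin d) ℝ, g.totalDegree ≤ n ∧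
      ∀ x : Fin d → ℤ,
        Lop d N ℓ i j (fun y => eval (fun t => (y t : ℝ)) f) x =
          eval (fun t => (x t : ℝ)) g :=
  stmt7_general d N ℓ i j n f hf
end

section
/- Let d ≥ 1 and N ≥ 1 be integers and let ℓ_1, …, ℓ_{d+1} be positive integers with ℓ_i ≤ N for all i and ℓ_i + ℓ_j ≥ N for all 1 ≤ i < j ≤ d+1. For every pair of distinct indices i, j ∈ {1,…,d+1} and all functions f, g : ℤ^d → ℝ, the operator L_{i,j} is self-adjoint with respect to the inner product: ⟨L_{i,j}f, g⟩_{ℓ,N} = ⟨f, L_{i,j}g⟩_{ℓ,N}. -/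
/-!
Write `x_{d+1} = N - |x|` and work with integer points `y` whose extended coordinates
`E_k(y)` lie in `[0, ℓ_k]`. The weight factorises as `H = c ∏_k w_k(E_k)` with
`w_k(n) = (-ℓ_k)_n / n!`, and `w_k(n+1) (n+1) = w_k(n) (n - ℓ_k)` gives detailed balance
`H(y) r_{ij}(y) = H(y') r_{ji}(y')` for the move `y' = y + e_i - e_j`, where
`r_{ij}(y) = E_j(y) (E_i(y) - ℓ_i)` is the coefficient of that move in `L_{i,j}`.
The rate `r_{ij}(y)` vanishes when the move leaves the domain, so pairing `y` with `y'`
cancels `⟨L_{i,j} f, g⟩ - ⟨f, L_{i,j} g⟩` term by term.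
-/

open Finset

noncomputable section

/-- Pochhammer symbol `(a)_n = a(a+1)⋯(a+n-1)`. -/
def poch (a : ℝ) (n : ℕ) : ℝ := ∏ k ∈ Finset.range n, (a + k)

/-- The weight function `H_{ℓ,N}` on `V_{ℓ,N}^d`. -/
def weightH (d N : ℕ) (ℓ : Fin (d + 1) → ℕ) (x : Fin d → ℕ) : ℝ :=
  (Nat.factorial N : ℝ) / poch (-((∑ i, ℓ i : ℕ) : ℝ)) N *
    ((∏ i : Fin d, poch (-(ℓ i.castSucc : ℝ)) (x i) / (Nat.factorial (x i) : ℝ)) *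
      (poch (-(ℓ (Fin.last d) : ℝ)) (N - ∑ i, x i) /
        (Nat.factorial (N - ∑ i, x i) : ℝ)))

/-- The inner product `⟨f,g⟩_{ℓ,N}` for functions on `ℤ^d`. -/
def innerH (d N : ℕ) (ℓ : Fin (d + 1) → ℕ) (f g : (Fin d → ℤ) → ℝ) : ℝ :=
  ∑ x ∈ polyDomain d N ℓ,
    f (fun t => (x t : ℤ)) * g (fun t => (x t : ℤ)) * weightH d N ℓ x

theorem sum_eq_sum_of_detailed_balance {α M : Type*} [DecidableEq α] [AddCommMonoid M]
    (s : Finset α) (σ τ : α → α) (hτσ : ∀ x, τ (σ x) = x) (hστ : ∀ x, σ (τ x) = x)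
    (φ ψ : α → M) (hφ : ∀ x ∈ s, σ x ∉ s → φ x = 0) (hψ : ∀ x ∈ s, τ x ∉ s → ψ x = 0)
    (hφψ : ∀ x ∈ s, σ x ∈ s → φ x = ψ (σ x)) :
    ∑ x ∈ s, φ x = ∑ x ∈ s, ψ x :=
  calc ∑ x ∈ s, φ x = ∑ x ∈ s with σ x ∈ s, φ x :=
        (sum_filter_of_ne fun x hx h => by_contra fun h' => h (hφ x hx h')).symm
    _ = ∑ x ∈ s with τ x ∈ s, ψ x := by
        refine sum_nbij' σ τ ?_ ?_ (fun x _ => hτσ x) (fun x _ => hστ x) ?_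
        · intro x hx
          simp only [mem_filter] at hx ⊢
          exact ⟨hx.2, by rw [hτσ]; exact hx.1⟩
        · intro x hx
          simp only [mem_filter] at hx ⊢
          exact ⟨hx.2, by rw [hστ]; exact hx.1⟩
        · intro x hx
          rw [mem_filter] at hx
          exact hφψ x hx.1 hx.2
    _ = ∑ x ∈ s, ψ x := sum_filter_of_ne fun x hx h => by_contra fun h' => h (hψ x hx h')

def pochWeight (a : ℝ) (n : ℕ) : ℝ := poch a n / n.factorial

theorem pochWeight_succ_mul (a : ℝ) (n : ℕ) :
    pochWeight a (n + 1) * (n + 1) = pochWeight a n * (a + n) := by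
  simp only [pochWeight, poch, prod_range_succ, Nat.factorial_succ]
  push_cast
  field_simp

theorem prod_pochWeight_transfer {ι : Type*} [Fintype ι] [DecidableEq ι] (a : ι → ℝ)
    {i j : ι} (hij : i ≠ j) {n n' : ι → ℕ} (hi : n' i = n i + 1) (hj : n j = n' j + 1)
    (hk : ∀ k, k ≠ i → k ≠ j → n' k = n k) :
    (∏ k, pochWeight (a k) (n k)) * (n j * (a i + n i)) =
      (∏ k, pochWeight (a k) (n' k)) * (n' i * (a j + n' j)) := by
  have hj_mem : j ∈ univ.erase i := mem_erase.mpr ⟨hij.symm, mem_univ j⟩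
  simp only [← mul_prod_erase univ _ (mem_univ i), ← mul_prod_erase _ _ hj_mem]
  have hrest : ∏ k ∈ (univ.erase i).erase j, pochWeight (a k) (n' k) =
      ∏ k ∈ (univ.erase i).erase j, pochWeight (a k) (n k) :=
    prod_congr rfl fun k hk' => by
      rw [mem_erase, mem_erase] at hk'
      rw [hk k hk'.2.1 hk'.1]
  rw [hrest]
  have hi' := pochWeight_succ_mul (a i) (n i)
  have hj' := pochWeight_succ_mul (a j) (n' j)
  rw [hi, hj]
  push_cast
  linear_combination (∏ k ∈ (univ.erase i).erase j, pochWeight (a k) (n k)) *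
    ((a i + n i) * pochWeight (a i) (n i) * hj' - (a j + n' j) * pochWeight (a j) (n' j) * hi')

section PolyDomain

variable {d N : ℕ}

def extCoord (d N : ℕ) (y : Fin d → ℤ) (k : Fin (d + 1)) : ℤ :=
  if h : (k : ℕ) < d then y ⟨k, h⟩ else N - ∑ t, y t

theorem coordExt_eq_extCoord (y : Fin d → ℤ) (k : Fin (d + 1)) :
    coordExt d N y k = extCoord d N y k := by
  unfold coordExt extCoord
  split_ifs <;> push_cast <;> rfl

@[simp]
theorem extCoord_castSucc (y : Fin d → ℤ) (t : Fin d) : extCoord d N y t.castSucc = y t := by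
  simp [extCoord]

@[simp]
theorem extCoord_last (y : Fin d → ℤ) : extCoord d N y (Fin.last d) = N - ∑ t, y t := by
  simp [extCoord]

theorem shiftVec_apply (k : Fin (d + 1)) (t : Fin d) :
    shiftVec d k t = if (k : ℕ) = t then 1 else 0 := by
  unfold shiftVec
  split_ifs with h h'
  · rw [show (⟨k, h⟩ : Fin d) = t from Fin.ext h', Pi.single_eq_same]
  · exact Pi.single_eq_of_ne (fun h'' => h' (congrArg Fin.val h'').symm) _
  · omega
  · rfl

theorem sum_shiftVec (k : Fin (d + 1)) : ∑ t, shiftVec d k t = if (k : ℕ) < d then 1 else 0 := by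
  unfold shiftVec
  split_ifs <;> simp

theorem extCoord_add_shiftVec_sub_shiftVec (y : Fin d → ℤ) (i j k : Fin (d + 1)) :
    extCoord d N (y + shiftVec d i - shiftVec d j) k =
      extCoord d N y k + (if k = i then 1 else 0) - (if k = j then 1 else 0) := by
  have hi := i.is_le
  have hj := j.is_le
  by_cases hk : (k : ℕ) < d
  · simp only [extCoord, dif_pos hk, Pi.sub_apply, Pi.add_apply, shiftVec_apply, Fin.ext_iff]
    split_ifs <;> omega
  · have hlast : ∀ m : Fin (d + 1), k = m ↔ ¬ (m : ℕ) < d := fun m => by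
      rw [Fin.ext_iff]; omega
    simp only [extCoord, dif_neg hk, Pi.sub_apply, Pi.add_apply, sum_sub_distrib,
      sum_add_distrib, sum_shiftVec, hlast]
    split_ifs <;> omega

def intDomain (d N : ℕ) (ℓ : Fin (d + 1) → ℕ) : Finset (Fin d → ℤ) :=
  (polyDomain d N ℓ).image fun x t => (x t : ℤ)

theorem mem_intDomain_iff {ℓ : Fin (d + 1) → ℕ} {y : Fin d → ℤ} :
    y ∈ intDomain d N ℓ ↔ ∀ k, 0 ≤ extCoord d N y k ∧ extCoord d N y k ≤ ℓ k := by
  simp only [Fin.forall_fin_succ', extCoord_castSucc, extCoord_last, intDomain, mem_image,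
    polyDomain, mem_filter, Fintype.mem_piFinset, mem_range]
  constructor
  · rintro ⟨x, ⟨hbox, hlow, hup⟩, rfl⟩
    beta_reduce
    have hsum : ∑ t, (x t : ℤ) = ((∑ t, x t : ℕ) : ℤ) := by push_cast; rfl
    refine ⟨fun t => ⟨by positivity, by have := hbox t; omega⟩, ?_, ?_⟩ <;> omega
  · rintro ⟨hbox, hlow, hup⟩
    have hsum : ((∑ t, (y t).toNat : ℕ) : ℤ) = ∑ t, y t := by
      push_cast
      exact sum_congr rfl fun t _ => Int.toNat_of_nonneg (hbox t).1
    refine ⟨fun t => (y t).toNat, ⟨fun t => ?_, ?_, ?_⟩, ?_⟩ <;> beta_reduce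
    · have := hbox t; omega
    · omega
    · omega
    · funext t
      exact Int.toNat_of_nonneg (hbox t).1

end PolyDomain

section Weight

variable {d N : ℕ}

def intWeight (d N : ℕ) (ℓ : Fin (d + 1) → ℕ) (y : Fin d → ℤ) : ℝ :=
  (N.factorial : ℝ) / poch (-((∑ i, ℓ i : ℕ) : ℝ)) N *
    ∏ k, pochWeight (-(ℓ k : ℝ)) (extCoord d N y k).toNat

theorem intWeight_natCast (ℓ : Fin (d + 1) → ℕ) (x : Fin d → ℕ) :
    intWeight d N ℓ (fun t => (x t : ℤ)) = weightH d N ℓ x := by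
  have hlast : (extCoord d N (fun t => (x t : ℤ)) (Fin.last d)).toNat = N - ∑ t, x t := by
    rw [extCoord_last, ← Nat.cast_sum]
    omega
  simp only [intWeight, weightH, Fin.prod_univ_castSucc, extCoord_castSucc, Int.toNat_natCast,
    hlast, pochWeight]

theorem innerH_eq_sum_intDomain (ℓ : Fin (d + 1) → ℕ) (F G : (Fin d → ℤ) → ℝ) :
    innerH d N ℓ F G = ∑ y ∈ intDomain d N ℓ, F y * G y * intWeight d N ℓ y := by
  rw [intDomain, sum_image fun x _ x' _ h => funext fun t => by exact_mod_cast congrFun h t]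
  simp only [innerH, intWeight_natCast]

def jumpRate (d : ℕ) (N : ℝ) (ℓ : Fin (d + 1) → ℝ) (i j : Fin (d + 1)) (y : Fin d → ℤ) : ℝ :=
  coordExt d N y j * (coordExt d N y i - ℓ i)

theorem jumpRate_eq_zero_of_not_mem {ℓ : Fin (d + 1) → ℕ} {i j : Fin (d + 1)} (hij : i ≠ j)
    {y : Fin d → ℤ} (hy : y ∈ intDomain d N ℓ)
    (hy' : y + shiftVec d i - shiftVec d j ∉ intDomain d N ℓ) :
    jumpRate d N (fun t => (ℓ t : ℝ)) i j y = 0 := by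
  rw [mem_intDomain_iff] at hy hy'
  obtain ⟨k, hk⟩ := not_forall.mp hy'
  rw [extCoord_add_shiftVec_sub_shiftVec] at hk
  have hyk := hy k
  have hfull : extCoord d N y j = 0 ∨ extCoord d N y i = ℓ i := by
    by_cases hki : k = i
    · subst hki
      simp only [↓reduceIte, if_neg hij] at hk
      omega
    · by_cases hkj : k = j
      · subst hkj
        simp only [↓reduceIte, if_neg hki] at hk
        omega
      · simp only [if_neg hki, if_neg hkj] at hk
        omega
  simp only [jumpRate, coordExt_eq_extCoord]
  rcases hfull with h | h <;> simp [h]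

theorem jumpRate_eq_toNat {ℓ : Fin (d + 1) → ℕ} {y : Fin d → ℤ} (hy : y ∈ intDomain d N ℓ)
    (i j : Fin (d + 1)) :
    jumpRate d N (fun t => (ℓ t : ℝ)) i j y =
      (extCoord d N y j).toNat * (-(ℓ i : ℝ) + (extCoord d N y i).toNat) := by
  rw [mem_intDomain_iff] at hy
  have hcast : ∀ k, ((extCoord d N y k).toNat : ℝ) = extCoord d N y k := fun k => by
    exact_mod_cast Int.toNat_of_nonneg (hy k).1
  simp only [jumpRate, coordExt_eq_extCoord, hcast]
  ring

theorem intWeight_mul_jumpRate_comm {ℓ : Fin (d + 1) → ℕ} {i j : Fin (d + 1)} (hij : i ≠ j)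
    {y : Fin d → ℤ} (hy : y ∈ intDomain d N ℓ)
    (hy' : y + shiftVec d i - shiftVec d j ∈ intDomain d N ℓ) :
    intWeight d N ℓ y * jumpRate d N (fun t => (ℓ t : ℝ)) i j y =
      intWeight d N ℓ (y + shiftVec d i - shiftVec d j) *
        jumpRate d N (fun t => (ℓ t : ℝ)) j i (y + shiftVec d i - shiftVec d j) := by
  rw [jumpRate_eq_toNat hy, jumpRate_eq_toNat hy']
  rw [mem_intDomain_iff] at hy hy'
  set y' := y + shiftVec d i - shiftVec d j
  have hmove := extCoord_add_shiftVec_sub_shiftVec (N := N) y i j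
  have hmove_i : extCoord d N y' i = extCoord d N y i + 1 := by simpa [hij] using hmove i
  have hmove_j : extCoord d N y' j = extCoord d N y j - 1 := by simpa [hij.symm] using hmove j
  have htransfer := prod_pochWeight_transfer (fun k => -(ℓ k : ℝ)) hij
    (n := fun k => (extCoord d N y k).toNat) (n' := fun k => (extCoord d N y' k).toNat)
    (by have := hy i; omega) (by have := hy' j; omega)
    (fun k hki hkj => by
      show (extCoord d N y' k).toNat = (extCoord d N y k).toNat
      rw [hmove k, if_neg hki, if_neg hkj, add_zero, sub_zero])
  unfold intWeight
  linear_combination (N.factorial : ℝ) / poch (-((∑ i, ℓ i : ℕ) : ℝ)) N * htransfer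

end Weight

theorem stmt8_general (d N : ℕ) (ℓ : Fin (d + 1) → ℕ)
    (i j : Fin (d + 1)) (hij : i ≠ j) (f g : (Fin d → ℤ) → ℝ) :
    innerH d N ℓ (Lop d (N : ℝ) (fun t => (ℓ t : ℝ)) i j f) g =
      innerH d N ℓ f (Lop d (N : ℝ) (fun t => (ℓ t : ℝ)) i j g) := by
  rw [innerH_eq_sum_intDomain, innerH_eq_sum_intDomain, ← sub_eq_zero, ← sum_sub_distrib]
  set σ : (Fin d → ℤ) → Fin d → ℤ := fun y => y + shiftVec d i - shiftVec d j
  set τ : (Fin d → ℤ) → Fin d → ℤ := fun y => y + shiftVec d j - shiftVec d i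
  set W := intWeight d N ℓ
  set r := jumpRate d N (fun t => (ℓ t : ℝ))
  have hτσ : ∀ y, τ (σ y) = y := fun y => by simp only [σ, τ]; abel
  have hστ : ∀ y, σ (τ y) = y := fun y => by simp only [σ, τ]; abel
  have hsplit : ∀ y, Lop d N (fun t => (ℓ t : ℝ)) i j f y * g y * W y -
      f y * Lop d N (fun t => (ℓ t : ℝ)) i j g y * W y =
      W y * r i j y * (f (σ y) * g y - f y * g (σ y)) -
        W y * r j i y * (f y * g (τ y) - f (τ y) * g y) := fun y => by
    simp only [Lop, r, jumpRate]
    ring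
  rw [sum_congr rfl fun y _ => hsplit y, sum_sub_distrib, sub_eq_zero]
  refine sum_eq_sum_of_detailed_balance _ σ τ hτσ hστ _ _ (fun y hy hσy => ?_)
    (fun y hy hτy => ?_) (fun y hy hσy => ?_)
  · simp only [r, jumpRate_eq_zero_of_not_mem hij hy hσy, mul_zero, zero_mul]
  · simp only [r, jumpRate_eq_zero_of_not_mem hij.symm hy hτy, mul_zero, zero_mul]
  · rw [intWeight_mul_jumpRate_comm hij hy hσy, hτσ]

/-- `L_{i,j}` is self-adjoint with respect to `⟨·,·⟩_{ℓ,N}`. -/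
theorem stmt8 (d N : ℕ) (hd : 1 ≤ d) (hN : 1 ≤ N) (ℓ : Fin (d + 1) → ℕ)
    (hpos : ∀ i, 1 ≤ ℓ i) (hle : ∀ i, ℓ i ≤ N)
    (hpair : ∀ i j : Fin (d + 1), i < j → N ≤ ℓ i + ℓ j)
    (i j : Fin (d + 1)) (hij : i ≠ j) (f g : (Fin d → ℤ) → ℝ) :
    innerH d N ℓ (Lop d (N : ℝ) (fun t => (ℓ t : ℝ)) i j f) g =
      innerH d N ℓ f (Lop d (N : ℝ) (fun t => (ℓ t : ℝ)) i j g) :=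
  stmt8_general d N ℓ i j hij f g

end
end

section
/- Let n ≥ 4 be an integer and p_1, …, p_n ∈ ℝ. For any four distinct indices i, j, k, m ∈ {1,…,n}, the Krawtchouk symmetry operators satisfy the identity p_k p_m · L_{i,j} = [L_{i,k}, [L_{k,m}, L_{j,m}]] + p_j p_k · L_{i,m} + p_i p_m · L_{j,k} − p_i p_j · L_{k,m}, where [A,B] = AB − BA. -/
set_option maxHeartbeats 4000000


open Finset

/-- The Krawtchouk symmetry operator `L_{i,j}` for distinct `i, j ∈ {1,…,n}`:
`(L_{i,j}f)(x) = p_i x_j (f(x+e_i-e_j)-f(x)) + p_j x_i (f(x+e_j-e_i)-f(x))`. -/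
def Kop (n : ℕ) (p : Fin n → ℝ) (i j : Fin n) (f : (Fin n → ℤ) → ℝ) :
    (Fin n → ℤ) → ℝ := fun x =>
  p i * (x j : ℝ) * (f (x + Pi.single i 1 - Pi.single j 1) - f x) +
    p j * (x i : ℝ) * (f (x + Pi.single j 1 - Pi.single i 1) - f x)

/-- Commutator `[A,B] = AB - BA` of operators. -/
def opComm {F : Type*} [AddCommGroup F] (A B : F → F) : F → F := A ∘ B - B ∘ A

/-- The relation `p_k p_m L_{i,j} = [L_{i,k},[L_{k,m},L_{j,m}]] + p_j p_k L_{i,m}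
+ p_i p_m L_{j,k} - p_i p_j L_{k,m}` for the Krawtchouk symmetry operators. -/
theorem stmt13 (n : ℕ) (hn : 4 ≤ n) (p : Fin n → ℝ) (i j k m : Fin n)
    (hij : i ≠ j) (hik : i ≠ k) (him : i ≠ m)
    (hjk : j ≠ k) (hjm : j ≠ m) (hkm : k ≠ m) :
    (p k * p m) • Kop n p i j =
      opComm (Kop n p i k) (opComm (Kop n p k m) (Kop n p j m))
      + (p j * p k) • Kop n p i m
      + (p i * p m) • Kop n p j k
      - (p i * p j) • Kop n p k m := by
  funext f x
  simp only [Kop, opComm, Pi.smul_apply, Pi.add_apply, Pi.sub_apply, Function.comp_apply,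
    smul_eq_mul, Pi.single_apply, if_neg hij, if_neg hik, if_neg him, if_neg hjk, if_neg hjm,
    if_neg hkm, if_neg hij.symm, if_neg hik.symm, if_neg him.symm, if_neg hjk.symm,
    if_neg hjm.symm, if_neg hkm.symm, add_zero, sub_zero]
  push_cast
  ring_nf
end

section
/- Let d ≥ 3 be an integer and a_1, …, a_d ∈ ℝ. For any three distinct indices i, j, k ∈ {1,…,d}, the Charlier symmetry operators satisfy the identity a_k · L_{i,j} = [L_{i,k}, [L_{j,k}, L_{k,d+1}]] + a_j a_k · L_{i,d+1} + a_i · L_{j,k} − a_i a_j · L_{k,d+1}, where [A,B] = AB − BA. -/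
open Finset

/-- The Charlier symmetry operator `L_{i,j}` for distinct `i, j ∈ {1,…,d}`:
`(L_{i,j}f)(x) = a_i x_j (f(x+e_i-e_j)-f(x)) + a_j x_i (f(x+e_j-e_i)-f(x))`. -/
def Cop (d : ℕ) (a : Fin d → ℝ) (i j : Fin d) (f : (Fin d → ℤ) → ℝ) :
    (Fin d → ℤ) → ℝ := fun x =>
  a i * (x j : ℝ) * (f (x + Pi.single i 1 - Pi.single j 1) - f x) +
    a j * (x i : ℝ) * (f (x + Pi.single j 1 - Pi.single i 1) - f x)

/-- The Charlier symmetry operator `L_{i,d+1}` for `i ∈ {1,…,d}`: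
`(L_{i,d+1}f)(x) = a_i(f(x+e_i)-f(x)) + x_i(f(x-e_i)-f(x))`. -/
def CopE (d : ℕ) (a : Fin d → ℝ) (i : Fin d) (f : (Fin d → ℤ) → ℝ) :
    (Fin d → ℤ) → ℝ := fun x =>
  a i * (f (x + Pi.single i 1) - f x) + (x i : ℝ) * (f (x - Pi.single i 1) - f x)

set_option maxHeartbeats 4000000 in
/-- The relation `a_k L_{i,j} = [L_{i,k},[L_{j,k},L_{k,d+1}]] + a_j a_k L_{i,d+1}
+ a_i L_{j,k} - a_i a_j L_{k,d+1}` for the Charlier symmetry operators. -/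
theorem stmt14 (d : ℕ) (hd : 3 ≤ d) (a : Fin d → ℝ) (i j k : Fin d)
    (hij : i ≠ j) (hik : i ≠ k) (hjk : j ≠ k) :
    a k • Cop d a i j =
      opComm (Cop d a i k) (opComm (Cop d a j k) (CopE d a k))
      + (a j * a k) • CopE d a i
      + a i • Cop d a j k
      - (a i * a j) • CopE d a k := by
  funext f x
  simp only [Cop, CopE, opComm, Pi.sub_apply, Pi.add_apply, Pi.smul_apply,
    Function.comp_apply, smul_eq_mul, Pi.single_apply, if_neg hij, if_neg hik, if_neg hjk,
    if_neg hij.symm, if_neg hik.symm, if_neg hjk.symm, if_pos rfl, sub_zero, add_zero]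
  push_cast
  ring_nf
end

section
/- Let d ≥ 3 be an integer. For any three distinct indices i, j, k ∈ {1,…,d}, the symmetry operators of the quantum harmonic oscillator satisfy the identity D_{i,j} = [D_{i,k}, [D_{j,k}, L_k]] as linear operators on the space ℝ[z_1,…,z_d] of real polynomials, where [A,B] = AB − BA. -/
open MvPolynomial

noncomputable section

/-- Partial differentiation `∂_k` as a linear endomorphism of `ℝ[z_1,…,z_d]`. -/
def pd (d : ℕ) (k : Fin d) : Module.End ℝ (MvPolynomial (Fin d) ℝ) :=
  (MvPolynomial.pderiv k).toLinearMap

/-- Multiplication by `z_k` as a linear endomorphism of `ℝ[z_1,…,z_d]`. -/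
def mulZ (d : ℕ) (k : Fin d) : Module.End ℝ (MvPolynomial (Fin d) ℝ) :=
  LinearMap.mulLeft ℝ (X k)

/-- The operator `L_k = (1/2)∂_k² - z_k ∂_k` (the operator `L_{k,d+1}` of the harmonic
oscillator Hamiltonian). -/
def Losc (d : ℕ) (k : Fin d) : Module.End ℝ (MvPolynomial (Fin d) ℝ) :=
  (1 / 2 : ℝ) • (pd d k * pd d k) - mulZ d k * pd d k

/-- The symmetry operator `D_{i,j} = -∂_i∂_j + z_i∂_j + z_j∂_i`. -/
def Dop (d : ℕ) (i j : Fin d) : Module.End ℝ (MvPolynomial (Fin d) ℝ) :=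
  -(pd d i * pd d j) + mulZ d i * pd d j + mulZ d j * pd d i

lemma pderiv_comm' {σ R : Type*} [CommSemiring R] (i j : σ) (p : MvPolynomial σ R) :
    pderiv i (pderiv j p) = pderiv j (pderiv i p) := by
  classical
  induction p using MvPolynomial.induction_on with
  | C a => simp
  | add p q hp hq => simp [hp, hq]
  | mul_X p n hp =>
    simp only [pderiv_mul, pderiv_X, hp, Pi.single_apply]
    split_ifs <;> simp_all [Pi.single_apply] <;> ring

lemma inner_comm (d : ℕ) (j k : Fin d) (hjk : j ≠ k) :
    Dop d j k * Losc d k - Losc d k * Dop d j k =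
      pd d j * mulZ d k - mulZ d j * pd d k := by
  refine LinearMap.ext fun p => ?_
  simp only [Dop, Losc, pd, mulZ, Module.End.mul_apply, LinearMap.sub_apply, LinearMap.add_apply,
    LinearMap.neg_apply, LinearMap.smul_apply, LinearMap.mulLeft_apply, Derivation.coeFn_coe,
    map_add, map_sub, map_neg, map_smul, pderiv_mul, pderiv_X_self,
    pderiv_X_of_ne hjk, pderiv_X_of_ne hjk.symm, smul_sub, smul_add, pderiv_C, pderiv_one,
    mul_zero, zero_mul, add_zero, zero_add, map_zero, neg_zero]
  simp only [pderiv_comm', smul_neg, smul_eq_C_mul]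
  have h2 : (MvPolynomial.C (1/2:ℝ) : MvPolynomial (Fin d) ℝ) * 2 = 1 := by
    rw [← map_ofNat (C : ℝ →+* MvPolynomial (Fin d) ℝ) 2, ← C_mul]; norm_num
  linear_combination (-((pderiv j) ((pderiv k) p))) * h2

/-- The relation `D_{i,j} = [D_{i,k}, [D_{j,k}, L_k]]` for the symmetry operators of
the quantum harmonic oscillator. -/
theorem stmt15 (d : ℕ) (hd : 3 ≤ d) (i j k : Fin d)
    (hij : i ≠ j) (hik : i ≠ k) (hjk : j ≠ k) :
    Dop d i j =
      Dop d i k * (Dop d j k * Losc d k - Losc d k * Dop d j k) -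
        (Dop d j k * Losc d k - Losc d k * Dop d j k) * Dop d i k := by
  rw [inner_comm d j k hjk]
  refine LinearMap.ext fun p => ?_
  simp only [Dop, Losc, pd, mulZ, Module.End.mul_apply, LinearMap.sub_apply, LinearMap.add_apply,
    LinearMap.neg_apply, LinearMap.smul_apply, LinearMap.mulLeft_apply, Derivation.coeFn_coe,
    map_add, map_sub, map_neg, map_smul, pderiv_mul, pderiv_X_self, pderiv_X_of_ne hij,
    pderiv_X_of_ne hik, pderiv_X_of_ne hjk, pderiv_X_of_ne hij.symm, pderiv_X_of_ne hik.symm,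
    pderiv_X_of_ne hjk.symm, pderiv_C, pderiv_one,
    mul_zero, zero_mul, add_zero, zero_add, map_zero, neg_zero]
  simp only [pderiv_comm']
  ring

end
end

section
/- Let N ≥ 1 and ℓ_1, ℓ_2, ℓ_3 be positive integers with ℓ_i ≤ N for i = 1,2,3 and ℓ_i + ℓ_j ≥ N for all 1 ≤ i < j ≤ 3. Define the height functions v, h : {0,1,…,ℓ_1} → ℕ by v(k) = |{(x_1,x_2) ∈ ℕ_0² : x_1 = k, x_2 ≤ ℓ_2, N−ℓ_3 ≤ x_1+x_2 ≤ N}| and h(k) = min(ℓ_2, ℓ_3, ⌊(ℓ_2+ℓ_3−k)/2⌋, ℓ_1+ℓ_2+ℓ_3−N−k, N−k) + 1. Then there exists a permutation τ of {0,1,…,ℓ_1} such that v(τ(k)) = h(k) for every k ∈ {0,1,…,ℓ_1}. -/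
/-!
As a function of `k`, `vHeight` is a tent: it rises with slope one, may stay constant, and
falls with slope one, while `hHeight` is non-increasing. For every level `t` the superlevel sets
`{k ≤ ℓ₁ | t ≤ vHeight k}` and `{k ≤ ℓ₁ | t ≤ hHeight k}` are intervals of the same length
(the second one starting at `0`, so `hHeight` is the decreasing rearrangement of `vHeight`).
Hence both functions take every value equally often on `{0, …, ℓ₁}`, and matching their fibres
bijectively gives `τ`.
-/

open Finset

/-- The height function of the hexagonal domain `V_{ℓ,N}²`: the number of lattice
points of `V_{ℓ,N}²` on the vertical line `x₁ = k`. -/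
def vHeight (N ℓ₂ ℓ₃ : ℕ) (k : ℕ) : ℕ :=
  ((Finset.range (ℓ₂ + 1)).filter fun x₂ => N - ℓ₃ ≤ k + x₂ ∧ k + x₂ ≤ N).card

/-- The height function of the index set `H_{ℓ,N}²`. -/
def hHeight (N ℓ₁ ℓ₂ ℓ₃ : ℕ) (k : ℕ) : ℕ :=
  min (min (min (min ℓ₂ ℓ₃) ((ℓ₂ + ℓ₃ - k) / 2)) (ℓ₁ + ℓ₂ + ℓ₃ - N - k)) (N - k) + 1

theorem exists_perm_apply_eq_of_card_fiber_eq {α β : Type*} [Fintype α] [DecidableEq β]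
    (f g : α → β) (h : ∀ b, #{a | f a = b} = #{a | g a = b}) :
    ∃ σ : Equiv.Perm α, ∀ a, f (σ a) = g a :=
  let e (b : β) : {a // g a = b} ≃ {a // f a = b} :=
    Fintype.equivOfCardEq (by simp only [Fintype.card_subtype, h])
  ⟨Equiv.ofFiberEquiv e, Equiv.ofFiberEquiv_map e⟩

theorem card_filter_le_eq_card_filter_eq_add {α : Type*} (s : Finset α) (f : α → ℕ) (t : ℕ) :
    #{a ∈ s | t ≤ f a} = #{a ∈ s | f a = t} + #{a ∈ s | t + 1 ≤ f a} := by
  classical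
  rw [← card_union_of_disjoint (disjoint_filter.mpr fun _ _ h₁ h₂ => by omega), ← filter_or]
  exact congrArg card (filter_congr fun _ _ => by omega)

theorem card_filter_eq_eq_of_card_filter_le_eq {α : Type*} (s : Finset α) (f g : α → ℕ)
    (h : ∀ t, #{a ∈ s | t ≤ f a} = #{a ∈ s | t ≤ g a}) (t : ℕ) :
    #{a ∈ s | f a = t} = #{a ∈ s | g a = t} := by
  have hf := card_filter_le_eq_card_filter_eq_add s f t
  have hg := card_filter_le_eq_card_filter_eq_add s g t
  have := h t
  have := h (t + 1)
  omega

theorem Fin.card_filter_val (n : ℕ) (p : ℕ → Prop) [DecidablePred p] :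
    #{i : Fin n | p i} = #{k ∈ range n | p k} := by
  rw [← image_fin_univ, filter_image, card_image_of_injective _ Fin.val_injective]

theorem vHeight_eq (N ℓ₂ ℓ₃ k : ℕ) :
    vHeight N ℓ₂ ℓ₃ k = min (ℓ₂ + 1) (N + 1 - k) - (N - ℓ₃ - k) := by
  have : {x ∈ range (ℓ₂ + 1) | N - ℓ₃ ≤ k + x ∧ k + x ≤ N}
      = Ico (N - ℓ₃ - k) (min (ℓ₂ + 1) (N + 1 - k)) := by
    ext x
    simp only [mem_filter, mem_range, mem_Ico]
    omega
  rw [vHeight, this, Nat.card_Ico]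

theorem card_filter_le_vHeight_eq_card_filter_le_hHeight {N ℓ₁ ℓ₂ ℓ₃ : ℕ}
    (h₁N : ℓ₁ ≤ N) (h₃N : ℓ₃ ≤ N) (h₁₃ : N ≤ ℓ₁ + ℓ₃) (h₂₃ : N ≤ ℓ₂ + ℓ₃) (t : ℕ) :
    #{k ∈ range (ℓ₁ + 1) | t ≤ vHeight N ℓ₂ ℓ₃ k}
      = #{k ∈ range (ℓ₁ + 1) | t ≤ hHeight N ℓ₁ ℓ₂ ℓ₃ k} := by
  by_cases ht : t ≤ min ℓ₂ ℓ₃ + 1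
  · have hv : {k ∈ range (ℓ₁ + 1) | t ≤ vHeight N ℓ₂ ℓ₃ k}
        = Icc (N + t - ℓ₂ - ℓ₃ - 1) (min ℓ₁ (N + 1 - t)) := by
      ext k
      simp only [mem_filter, mem_range, mem_Icc, vHeight_eq]
      omega
    have hh : {k ∈ range (ℓ₁ + 1) | t ≤ hHeight N ℓ₁ ℓ₂ ℓ₃ k}
        = Icc 0 (min (min (min ℓ₁ (ℓ₂ + ℓ₃ + 2 - 2 * t)) (ℓ₁ + ℓ₂ + ℓ₃ + 1 - N - t))
            (N + 1 - t)) := by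
      ext k
      rw [mem_filter, mem_range, mem_Icc, hHeight]
      omega
    rw [hv, hh, Nat.card_Icc, Nat.card_Icc]
    omega
  · have hv : ∀ k, ¬ t ≤ vHeight N ℓ₂ ℓ₃ k := fun k => by rw [vHeight_eq]; omega
    have hh : ∀ k, ¬ t ≤ hHeight N ℓ₁ ℓ₂ ℓ₃ k := fun k => by rw [hHeight]; omega
    simp only [hv, hh, filter_false]

theorem stmt16_general (N ℓ₁ ℓ₂ ℓ₃ : ℕ)
    (h₁N : ℓ₁ ≤ N) (h₃N : ℓ₃ ≤ N)
    (h₁₃ : N ≤ ℓ₁ + ℓ₃) (h₂₃ : N ≤ ℓ₂ + ℓ₃) :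
    ∃ τ : Equiv.Perm (Fin (ℓ₁ + 1)), ∀ k : Fin (ℓ₁ + 1),
      vHeight N ℓ₂ ℓ₃ (τ k : ℕ) = hHeight N ℓ₁ ℓ₂ ℓ₃ (k : ℕ) := by
  refine exists_perm_apply_eq_of_card_fiber_eq (fun k : Fin (ℓ₁ + 1) => vHeight N ℓ₂ ℓ₃ k)
    (fun k => hHeight N ℓ₁ ℓ₂ ℓ₃ k) fun n => ?_
  rw [Fin.card_filter_val (p := fun k => vHeight N ℓ₂ ℓ₃ k = n),
    Fin.card_filter_val (p := fun k => hHeight N ℓ₁ ℓ₂ ℓ₃ k = n)]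
  exact card_filter_eq_eq_of_card_filter_le_eq _ _ _
    (card_filter_le_vHeight_eq_card_filter_le_hHeight h₁N h₃N h₁₃ h₂₃) n

/-- There is a permutation `τ` of `{0,…,ℓ₁}` carrying the height function of
`V_{ℓ,N}²` to that of `H_{ℓ,N}²`: `v ∘ τ = h`. -/
theorem stmt16 (N ℓ₁ ℓ₂ ℓ₃ : ℕ) (hN : 1 ≤ N)
    (h₁ : 1 ≤ ℓ₁) (h₂ : 1 ≤ ℓ₂) (h₃ : 1 ≤ ℓ₃)
    (h₁N : ℓ₁ ≤ N) (h₂N : ℓ₂ ≤ N) (h₃N : ℓ₃ ≤ N)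
    (h₁₂ : N ≤ ℓ₁ + ℓ₂) (h₁₃ : N ≤ ℓ₁ + ℓ₃) (h₂₃ : N ≤ ℓ₂ + ℓ₃) :
    ∃ τ : Equiv.Perm (Fin (ℓ₁ + 1)), ∀ k : Fin (ℓ₁ + 1),
      vHeight N ℓ₂ ℓ₃ (τ k : ℕ) = hHeight N ℓ₁ ℓ₂ ℓ₃ (k : ℕ) :=
  stmt16_general N ℓ₁ ℓ₂ ℓ₃ h₁N h₃N h₁₃ h₂₃
end

section
/- Let d ≥ 3 and N ≥ 1 be integers and let ℓ_d, ℓ_{d+1} be nonnegative integers with ℓ_d ≤ N, ℓ_{d+1} ≤ N and ℓ_d + ℓ_{d+1} ≥ N. Then |H^d(N,…,N,ℓ_d,ℓ_{d+1},N)| = C(N+d, d) − C(N−ℓ_d+d−1, d) − C(N−ℓ_{d+1}+d−1, d), where the first d−1 parameters equal N and C(a,b) denotes the binomial coefficient (equal to 0 when a < b). -/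
/-!
Write `a = ℓ_d`, `b = ℓ_{d+1}`. Since `N ≤ a + b`, the constraints of `H^d(N,…,N,a,b,N)` other
than `|ν| ≤ N` reduce to `ν_d ≤ a`, `ν_d ≤ b` and `ν_{d-1} + 2ν_d ≤ a + b`. The simplex
`{|ν| ≤ N}` has `C(N+d,d)` points. The violators with `ν_d > b` form a translate of
`{|ν| ≤ N-b-1}`; the shear moving `ν_{d-1} + ν_d - b` units from coordinate `d-1` to `d`
preserves `|ν|` and maps the remaining violators bijectively onto `{ν_d > a}`, a translate of
`{|ν| ≤ N-a-1}`.
-/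

open Finset

/-- `|ν^{j+1}| = ν_{j+1} + ⋯ + ν_d` (1-indexed). -/
def tailSum (d : ℕ) (ν : Fin d → ℕ) (j : Fin d) : ℕ :=
  ∑ i ∈ Finset.univ.filter (fun i : Fin d => (j : ℕ) < (i : ℕ)), ν i

/-- `|ℓ^{j+1}| = ℓ_{j+1} + ⋯ + ℓ_{d+1}` (1-indexed). -/
def tailSumL (d : ℕ) (ℓ : Fin (d + 1) → ℕ) (j : Fin d) : ℕ :=
  ∑ i ∈ Finset.univ.filter (fun i : Fin (d + 1) => (j : ℕ) < (i : ℕ)), ℓ i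

/-- The set `H^d(ℓ₁,…,ℓ_{d+1},N)`. -/
def Hd (d N : ℕ) (ℓ : Fin (d + 1) → ℕ) : Finset (Fin d → ℕ) :=
  (Fintype.piFinset fun _ : Fin d => Finset.range (N + 1)).filter fun ν =>
    (∀ j : Fin d, ν j ≤ ℓ j.castSucc) ∧
    (∀ j : Fin d, ν j + 2 * tailSum d ν j ≤ tailSumL d ℓ j) ∧
    (∑ i, ν i) + N ≤ ∑ i, ℓ i ∧ (∑ i, ν i) ≤ N

section Transfer

variable {ι : Type*} [DecidableEq ι]

theorem single_le_of_le_apply {i : ι} {c : ℕ} {ν : ι → ℕ} (h : c ≤ ν i) : Pi.single i c ≤ ν :=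
  fun j => by rcases eq_or_ne j i with rfl | hji <;> simp [*]

theorem sum_add_single_s19 [Fintype ι] (μ : ι → ℕ) (i : ι) (c : ℕ) :
    ∑ j, (μ + Pi.single i c : ι → ℕ) j = ∑ j, μ j + c := by
  simp [sum_add_distrib]

def transfer (src dst : ι) (k : ℕ) (ν : ι → ℕ) : ι → ℕ :=
  ν - Pi.single src k + Pi.single dst k

variable {src dst : ι} {k : ℕ} {ν : ι → ℕ}

theorem transfer_apply_src (h : src ≠ dst) : transfer src dst k ν src = ν src - k := by
  simp [transfer, h]

theorem transfer_apply_dst (h : src ≠ dst) : transfer src dst k ν dst = ν dst + k := by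
  simp [transfer, h.symm]

theorem transfer_apply_of_ne {j : ι} (hs : j ≠ src) (hd : j ≠ dst) :
    transfer src dst k ν j = ν j := by
  simp [transfer, hs, hd]

theorem sum_transfer [Fintype ι] (hk : k ≤ ν src) :
    ∑ j, transfer src dst k ν j = ∑ j, ν j := by
  have hsub := sum_add_single_s19 (ν - Pi.single src k) src k
  rw [tsub_add_cancel_of_le (single_le_of_le_apply hk)] at hsub
  rw [transfer, sum_add_single_s19, hsub]

theorem transfer_transfer (h : src ≠ dst) (hk : k ≤ ν src) :
    transfer dst src k (transfer src dst k ν) = ν := by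
  ext j
  rcases eq_or_ne j src with rfl | hs
  · rw [transfer_apply_dst h.symm, transfer_apply_src h]; omega
  rcases eq_or_ne j dst with rfl | hd
  · rw [transfer_apply_src h.symm, transfer_apply_dst h]; omega
  · rw [transfer_apply_of_ne hd hs, transfer_apply_of_ne hs hd]

end Transfer

def simplexPoints (ι : Type*) [Fintype ι] [DecidableEq ι] (M : ℕ) : Finset (ι → ℕ) :=
  (Fintype.piFinset fun _ => range (M + 1)).filter fun ν => ∑ i, ν i ≤ M

section Simplex

variable {ι : Type*} [Fintype ι] [DecidableEq ι] {M : ℕ} {ν : ι → ℕ}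

theorem mem_simplexPoints : ν ∈ simplexPoints ι M ↔ ∑ i, ν i ≤ M := by
  simp only [simplexPoints, mem_filter, Fintype.mem_piFinset, mem_range, and_iff_right_iff_imp]
  intro h i
  exact Nat.lt_succ_of_le ((single_le_sum (fun j _ => Nat.zero_le (ν j)) (mem_univ i)).trans h)

theorem add_le_sum_of_ne {p q : ι} (hpq : p ≠ q) (ν : ι → ℕ) : ν p + ν q ≤ ∑ i, ν i := by
  rw [← sum_pair hpq]
  exact sum_le_sum_of_subset (subset_univ _)

/-- Stars and bars, with a slack coordinate absorbing `M - ∑ ν`. -/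
theorem card_simplexPoints (M : ℕ) :
    #(simplexPoints ι M) = (M + Fintype.card ι).choose (Fintype.card ι) := by
  have slack : #(simplexPoints ι M) = #(piAntidiag (univ : Finset (Option ι)) M) := by
    refine card_nbij' (fun ν o => o.elim (M - ∑ i, ν i) ν) (fun f i => f (some i)) ?_ ?_ ?_ ?_
    · intro ν hν
      simp only [mem_coe, mem_simplexPoints, mem_piAntidiag, Fintype.sum_option] at hν ⊢
      simp only [Option.elim_none, Option.elim_some, mem_univ, implies_true, and_true]
      omega
    · intro f hf
      simp only [mem_coe, mem_simplexPoints, mem_piAntidiag, Fintype.sum_option] at hf ⊢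
      omega
    · intro ν _
      rfl
    · intro f hf
      simp only [mem_coe, mem_piAntidiag, Fintype.sum_option] at hf
      funext o
      cases o
      · simp only [Option.elim_none]; omega
      · rfl
  rw [slack, ← map_sym_eq_piAntidiag, card_map, sym_univ, card_univ, Sym.card_sym_eq_choose,
    Fintype.card_option, show Fintype.card ι + 1 + M - 1 = M + Fintype.card ι by omega,
    Nat.choose_symm_add]

theorem card_filter_le_apply_simplexPoints (i : ι) (c M : ℕ) :
    #{ν ∈ simplexPoints ι M | c ≤ ν i} = (M + Fintype.card ι - c).choose (Fintype.card ι) := by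
  rcases le_or_gt c M with hc | hc
  · have shift : {ν ∈ simplexPoints ι M | c ≤ ν i} =
        (simplexPoints ι (M - c)).image (· + Pi.single i c) := by
      ext ν
      simp only [mem_filter, mem_image, mem_simplexPoints]
      constructor
      · rintro ⟨hν, hci⟩
        have hsub := tsub_add_cancel_of_le (single_le_of_le_apply hci)
        refine ⟨ν - Pi.single i c, ?_, hsub⟩
        have := sum_add_single_s19 (ν - Pi.single i c) i c
        rw [hsub] at this
        omega
      · rintro ⟨μ, hμ, rfl⟩
        exact ⟨by rw [sum_add_single_s19]; omega, by simp⟩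
    rw [shift, card_image_of_injective _ (add_left_injective _), card_simplexPoints]
    congr 1
    omega
  · have : 0 < Fintype.card ι := Fintype.card_pos_iff.mpr ⟨i⟩
    rw [Nat.choose_eq_zero_of_lt (by omega), card_eq_zero, filter_eq_empty_iff]
    intro ν hν
    have := (single_le_sum (fun j _ => Nat.zero_le (ν j)) (mem_univ i)).trans
      (mem_simplexPoints.mp hν)
    omega

theorem card_filter_shear_simplexPoints {p q : ι} (hpq : p ≠ q) {a b : ℕ} (hM : M ≤ a + b) :
    #{ν ∈ simplexPoints ι M | ν p ≤ b ∧ (a < ν p ∨ a + b < ν q + 2 * ν p)} =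
      #{ν ∈ simplexPoints ι M | a < ν p} := by
  refine card_nbij' (fun ν => transfer q p (ν q + ν p - b) ν)
    (fun μ => transfer p q (μ q + μ p - b) μ) ?_ ?_ ?_ ?_
  · intro ν hν
    simp only [coe_filter, Set.mem_ofPred_eq, mem_simplexPoints] at hν ⊢
    have := add_le_sum_of_ne hpq ν
    rw [sum_transfer (by omega), transfer_apply_dst hpq.symm]
    omega
  · intro μ hμ
    simp only [coe_filter, Set.mem_ofPred_eq, mem_simplexPoints] at hμ ⊢
    have := add_le_sum_of_ne hpq μ
    rw [sum_transfer (by omega), transfer_apply_src hpq, transfer_apply_dst hpq]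
    omega
  · intro ν hν
    simp only [coe_filter, Set.mem_ofPred_eq, mem_simplexPoints] at hν
    simp only [transfer_apply_src hpq.symm, transfer_apply_dst hpq.symm]
    rw [show ν q - (ν q + ν p - b) + (ν p + (ν q + ν p - b)) - b = ν q + ν p - b by omega]
    exact transfer_transfer hpq.symm (by omega)
  · intro μ hμ
    simp only [coe_filter, Set.mem_ofPred_eq, mem_simplexPoints] at hμ
    have := add_le_sum_of_ne hpq μ
    simp only [transfer_apply_src hpq, transfer_apply_dst hpq]
    rw [show μ q + (μ q + μ p - b) + (μ p - (μ q + μ p - b)) - b = μ q + μ p - b by omega]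
    exact transfer_transfer hpq (by omega)

theorem card_filter_simplexPoints_add_choose_add_choose {p q : ι} (hpq : p ≠ q) {a b : ℕ}
    (hM : M ≤ a + b) :
    #{ν ∈ simplexPoints ι M | ν p ≤ a ∧ ν p ≤ b ∧ ν q + 2 * ν p ≤ a + b} +
        (M + Fintype.card ι - (a + 1)).choose (Fintype.card ι) +
        (M + Fintype.card ι - (b + 1)).choose (Fintype.card ι) =
      (M + Fintype.card ι).choose (Fintype.card ι) := by
  set S := simplexPoints ι M
  have hgood := card_filter_add_card_filter_not (s := S)
    fun ν => ν p ≤ a ∧ ν p ≤ b ∧ ν q + 2 * ν p ≤ a + b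
  have hbad := card_filter_add_card_filter_not
    (s := {ν ∈ S | ¬(ν p ≤ a ∧ ν p ≤ b ∧ ν q + 2 * ν p ≤ a + b)}) fun ν => b + 1 ≤ ν p
  have hbig : {ν ∈ S | ¬(ν p ≤ a ∧ ν p ≤ b ∧ ν q + 2 * ν p ≤ a + b) ∧ b + 1 ≤ ν p} =
      {ν ∈ S | b + 1 ≤ ν p} :=
    filter_congr fun ν _ => by omega
  have hsmall : {ν ∈ S | ¬(ν p ≤ a ∧ ν p ≤ b ∧ ν q + 2 * ν p ≤ a + b) ∧ ¬b + 1 ≤ ν p} =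
      {ν ∈ S | ν p ≤ b ∧ (a < ν p ∨ a + b < ν q + 2 * ν p)} :=
    filter_congr fun ν _ => by omega
  have hsheared : {ν ∈ S | a < ν p} = {ν ∈ S | a + 1 ≤ ν p} := filter_congr fun ν _ => by omega
  rw [filter_filter, filter_filter, hbig, hsmall, card_filter_shear_simplexPoints hpq hM,
    hsheared, card_filter_le_apply_simplexPoints, card_filter_le_apply_simplexPoints] at hbad
  rw [show #S = _ from card_simplexPoints M] at hgood
  omega

end Simplex

theorem add_add_le_sum {ι : Type*} [DecidableEq ι] {s : Finset ι} {x y z : ι} (hx : x ∈ s)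
    (hy : y ∈ s) (hz : z ∈ s) (hxy : x ≠ y) (hxz : x ≠ z) (hyz : y ≠ z) (f : ι → ℕ) :
    f x + f y + f z ≤ ∑ i ∈ s, f i := by
  calc f x + f y + f z = ∑ i ∈ {x, y, z}, f i := by
        rw [sum_insert (by simp [hxy, hxz]), sum_pair hyz, add_assoc]
    _ ≤ ∑ i ∈ s, f i := sum_le_sum_of_subset fun i hi => by
        simp only [mem_insert, mem_singleton] at hi
        rcases hi with rfl | rfl | rfl <;> assumption

section Tails

variable {d : ℕ} {p q : Fin d}

theorem add_tailSum_le_sum (ν : Fin d → ℕ) (j : Fin d) : ν j + tailSum d ν j ≤ ∑ i, ν i := by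
  rw [tailSum, ← sum_insert (by simp)]
  exact sum_le_sum_of_subset (subset_univ _)

theorem tailSum_of_succ_eq (ν : Fin d → ℕ) (hp : p.val + 1 = d) : tailSum d ν p = 0 := by
  refine sum_eq_zero fun i hi => ?_
  simp only [mem_filter, mem_univ, true_and] at hi
  omega

theorem tailSum_of_add_two_eq (ν : Fin d → ℕ) (hp : p.val + 1 = d) (hq : q.val + 2 = d) :
    tailSum d ν q = ν p := by
  rw [tailSum, ← sum_singleton ν p]
  congr 1
  ext i
  simp only [mem_filter, mem_univ, true_and, mem_singleton, Fin.ext_iff]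
  omega

theorem tailSumL_of_succ_eq (ℓ : Fin (d + 1) → ℕ) (hp : p.val + 1 = d) :
    tailSumL d ℓ p = ℓ (Fin.last d) := by
  rw [tailSumL, ← sum_singleton ℓ (Fin.last d)]
  congr 1
  ext i
  simp only [mem_filter, mem_univ, true_and, mem_singleton, Fin.ext_iff, Fin.val_last]
  omega

theorem tailSumL_of_add_two_eq (ℓ : Fin (d + 1) → ℕ) (hp : p.val + 1 = d) (hq : q.val + 2 = d) :
    tailSumL d ℓ q = ℓ p.castSucc + ℓ (Fin.last d) := by
  rw [tailSumL, ← sum_pair (Fin.castSucc_lt_last p).ne]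
  congr 1
  ext i
  simp only [mem_filter, mem_univ, true_and, mem_insert, mem_singleton, Fin.ext_iff,
    Fin.val_last, Fin.val_castSucc]
  omega

end Tails

def lastTwoParams (d N a b : ℕ) : Fin (d + 1) → ℕ := fun t =>
  if (t : ℕ) < d - 1 then N else if (t : ℕ) = d - 1 then a else b

section LastTwoParams

variable {d N a b : ℕ} {p q : Fin d}

theorem lastTwoParams_castSucc_of_ne (hp : p.val + 1 = d) {j : Fin d} (hj : j ≠ p) :
    lastTwoParams d N a b j.castSucc = N := by
  have := Fin.val_ne_of_ne hj
  rw [lastTwoParams, Fin.val_castSucc, if_pos (by omega)]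

theorem lastTwoParams_castSucc (hp : p.val + 1 = d) : lastTwoParams d N a b p.castSucc = a := by
  rw [lastTwoParams, Fin.val_castSucc, if_neg (by omega), if_pos (by omega)]

theorem lastTwoParams_last (hd : 0 < d) : lastTwoParams d N a b (Fin.last d) = b := by
  rw [lastTwoParams, Fin.val_last, if_neg (by omega), if_neg (by omega)]

theorem le_sum_lastTwoParams (hp : p.val + 1 = d) (hq : q.val + 2 = d)
    {s : Finset (Fin (d + 1))} (hqs : q.castSucc ∈ s) (hps : p.castSucc ∈ s)
    (hlast : Fin.last d ∈ s) : N + a + b ≤ ∑ i ∈ s, lastTwoParams d N a b i := by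
  have := add_add_le_sum hqs hps hlast ((Fin.castSucc_injective d).ne (Fin.ne_of_val_ne
    (by omega))) (Fin.castSucc_lt_last q).ne (Fin.castSucc_lt_last p).ne (lastTwoParams d N a b)
  rwa [lastTwoParams_castSucc_of_ne hp (Fin.ne_of_val_ne (by omega)), lastTwoParams_castSucc hp,
    lastTwoParams_last (by omega)] at this

theorem Hd_lastTwoParams (hp : p.val + 1 = d) (hq : q.val + 2 = d) (hN : N ≤ a + b) :
    Hd d N (lastTwoParams d N a b) =
      {ν ∈ simplexPoints (Fin d) N | ν p ≤ a ∧ ν p ≤ b ∧ ν q + 2 * ν p ≤ a + b} := by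
  have tail_p := tailSumL_of_succ_eq (lastTwoParams d N a b) hp
  have tail_q := tailSumL_of_add_two_eq (lastTwoParams d N a b) hp hq
  rw [lastTwoParams_castSucc hp, lastTwoParams_last (by omega)] at tail_q
  rw [lastTwoParams_last (by omega)] at tail_p
  rw [Hd, simplexPoints, filter_filter]
  refine filter_congr fun ν _ => ⟨?_, ?_⟩
  · rintro ⟨hbound, htail, -, hsum⟩
    have hbp := hbound p
    have htp := htail p
    have htq := htail q
    rw [lastTwoParams_castSucc hp] at hbp
    rw [tailSum_of_succ_eq ν hp, tail_p] at htp
    rw [tailSum_of_add_two_eq ν hp hq, tail_q] at htq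
    exact ⟨hsum, hbp, by omega, htq⟩
  · rintro ⟨hsum, hpa, hpb, hqab⟩
    refine ⟨fun j => ?_, fun j => ?_, ?_, hsum⟩
    · rcases eq_or_ne j p with rfl | hj
      · rwa [lastTwoParams_castSucc hp]
      · rw [lastTwoParams_castSucc_of_ne hp hj]
        exact (single_le_sum (fun i _ => Nat.zero_le (ν i)) (mem_univ j)).trans hsum
    · rcases lt_trichotomy j.val q.val with hjq | hjq | hjq
      · have := add_tailSum_le_sum ν j
        have := le_sum_lastTwoParams (N := N) (a := a) (b := b) hp hq
          (s := univ.filter fun i : Fin (d + 1) => (j : ℕ) < (i : ℕ))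
          (by simp only [mem_filter, mem_univ, true_and, Fin.val_castSucc]; omega)
          (by simp only [mem_filter, mem_univ, true_and, Fin.val_castSucc]; omega)
          (by simp only [mem_filter, mem_univ, true_and, Fin.val_last]; omega)
        rw [tailSumL]
        omega
      · rw [Fin.ext hjq, tailSum_of_add_two_eq ν hp hq, tail_q]
        exact hqab
      · rw [Fin.ext (show j.val = p.val by omega), tailSum_of_succ_eq ν hp, tail_p]
        omega
    · have := le_sum_lastTwoParams (N := N) (a := a) (b := b) hp hq (mem_univ _) (mem_univ _)
        (mem_univ _)
      omega

end LastTwoParams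

theorem stmt19_general (d N : ℕ) (hd : 3 ≤ d) (ℓd ℓd1 : ℕ)
    (hd1 : ℓd ≤ N) (hd2 : ℓd1 ≤ N) (hsum : N ≤ ℓd + ℓd1) :
    ((Hd d N (fun t : Fin (d + 1) =>
        if (t : ℕ) < d - 1 then N else if (t : ℕ) = d - 1 then ℓd else ℓd1)).card : ℤ) =
      ((N + d).choose d : ℤ) - ((N - ℓd + d - 1).choose d : ℤ) -
        ((N - ℓd1 + d - 1).choose d : ℤ) := by
  let p : Fin d := ⟨d - 1, by omega⟩
  let q : Fin d := ⟨d - 2, by omega⟩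
  have hcount := card_filter_simplexPoints_add_choose_add_choose (p := p) (q := q)
    (Fin.ne_of_val_ne (show d - 1 ≠ d - 2 by omega)) hsum
  rw [Fintype.card_fin, ← Hd_lastTwoParams (show d - 1 + 1 = d by omega)
    (show d - 2 + 2 = d by omega) hsum] at hcount
  change ((Hd d N (lastTwoParams d N ℓd ℓd1)).card : ℤ) = _
  rw [show N - ℓd + d - 1 = N + d - (ℓd + 1) by omega,
    show N - ℓd1 + d - 1 = N + d - (ℓd1 + 1) by omega]
  omega

/-- Lemma 5.3: `|H^d(N,…,N,ℓ_d,ℓ_{d+1},N)| = C(N+d,d) - C(N-ℓ_d+d-1,d)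
- C(N-ℓ_{d+1}+d-1,d)`, where the first `d-1` parameters equal `N`. -/
theorem stmt19 (d N : ℕ) (hd : 3 ≤ d) (hN : 1 ≤ N) (ℓd ℓd1 : ℕ)
    (hd1 : ℓd ≤ N) (hd2 : ℓd1 ≤ N) (hsum : N ≤ ℓd + ℓd1) :
    ((Hd d N (fun t : Fin (d + 1) =>
        if (t : ℕ) < d - 1 then N else if (t : ℕ) = d - 1 then ℓd else ℓd1)).card : ℤ) =
      ((N + d).choose d : ℤ) - ((N - ℓd + d - 1).choose d : ℤ) -
        ((N - ℓd1 + d - 1).choose d : ℤ) :=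
  stmt19_general d N hd ℓd ℓd1 hd1 hd2 hsum
end
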